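/- Let K, V ⊂ R^m be cubes with K ⊂ 3V (or more generally two cubes with ℓ(K) ≤ ℓ(V) whose distance is at most 2ℓ(V)). Then ∫_K ∫_V |x - y|^{-m} dx dy ≤ C(m) |K| (1 + log(ℓ(V)/ℓ(K))) — in particular, for disjoint sibling dyadic children V', V'' of a common dyadic cube V one has ∫_{V'} ∫_{V''} |x-y|^{-m} dx dy ≤ C(m)|V|. -/

import Mathlib

/-!
Fix `y ∈ K` outside `V` and let `d` be its ℓ^∞ distance to `V`. Then `V` lies in the annulus
`d ≤ |x - y| ≤ ℓ(V) + d`, which is covered by about `log₂ (ℓ(V) / d)` dyadic shells, and each shell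
contributes at most `4^m` to `∫_V |x - y|^{-m} dx`. Since
`log (ℓ(V) / d) ≤ log (ℓ(V) / ℓ(K)) + log⁺ (ℓ(K) / d)`, it remains to integrate `log⁺ (ℓ(K) / d)`
over `K`: the points of `K` within distance `s` of `V` lie in `m` slabs of total volume
`2 m s ℓ(K)^(m-1)`, and the layer-cake formula turns this linear bound into
`∫_K log⁺ (ℓ(K) / d) ≤ 2 m |K|`.
-/

open MeasureTheory Metric Real
open scoped ENNReal

theorem integral_le_of_lintegral_enorm_le {α : Type*} [MeasurableSpace α] {μ : Measure α}
    {f : α → ℝ} {B : ℝ} (hB : 0 ≤ B) (h : ∫⁻ x, ‖f x‖ₑ ∂μ ≤ ENNReal.ofReal B) :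
    ∫ x, f x ∂μ ≤ B := by
  have habs := (enorm_integral_le_lintegral_enorm f).trans h
  rw [Real.enorm_eq_ofReal_abs, ENNReal.ofReal_le_ofReal_iff hB] at habs
  exact (le_abs_self _).trans habs

theorem lintegral_posLog_div_le {α : Type*} [MeasurableSpace α] (μ : Measure α) {D : α → ℝ}
    (hDm : Measurable D) (hD : ∀ y, 0 ≤ D y) {L c : ℝ} (hL : 0 < L) (hc : 0 ≤ c)
    (h : ∀ s > 0, μ {y | 0 < D y ∧ D y ≤ s} ≤ ENNReal.ofReal (c * s)) :
    ∫⁻ y, ENNReal.ofReal (log⁺ (L / D y)) ∂μ ≤ ENNReal.ofReal (c * L) := by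
  have hsuper : ∀ t > 0, {y | t < log⁺ (L / D y)} ⊆ {y | 0 < D y ∧ D y ≤ L * exp (-t)} := by
    intro t ht y hy
    have hlog : t < log (L / D y) := (lt_max_iff.mp hy).resolve_left ht.not_gt
    have hone : 1 < L / D y := (log_pos_iff (div_nonneg hL.le (hD y))).mp (ht.trans hlog)
    have hDpos : 0 < D y := (hD y).lt_of_ne fun h0 => by rw [← h0, div_zero] at hone; linarith
    rw [lt_log_iff_exp_lt (one_pos.trans hone), lt_div_iff₀ hDpos] at hlog
    refine ⟨hDpos, ?_⟩
    rw [exp_neg, ← div_eq_mul_inv, le_div_iff₀ (exp_pos t), mul_comm]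
    exact hlog.le
  calc ∫⁻ y, ENNReal.ofReal (log⁺ (L / D y)) ∂μ
      = ∫⁻ t in Set.Ioi 0, μ {y | t < log⁺ (L / D y)} :=
        lintegral_eq_lintegral_meas_lt μ (.of_forall fun _ => posLog_nonneg)
          (continuous_posLog.measurable.comp (measurable_const.div hDm)).aemeasurable
    _ ≤ ∫⁻ t in Set.Ioi 0, ENNReal.ofReal (c * (L * exp (-t))) :=
        setLIntegral_mono' measurableSet_Ioi fun t ht =>
          (measure_mono (hsuper t ht)).trans (h _ (by positivity))
    _ = ENNReal.ofReal (c * L) := by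
        rw [← ofReal_integral_eq_lintegral_ofReal
            (((integrableOn_exp_neg_Ioi 0).const_mul L).const_mul c)
            (.of_forall fun _ => by positivity),
          integral_const_mul, integral_const_mul, integral_exp_neg_Ioi_zero, mul_one]

section

variable {m : ℕ}

theorem setLIntegral_rpow_neg_dist_shell_le (y : Fin m → ℝ) {a : ℝ} (ha : 0 < a) :
    ∫⁻ x in closedBall y (2 * a) \ ball y a, ENNReal.ofReal (dist x y ^ (-(m : ℝ)))
      ≤ ENNReal.ofReal (4 ^ m) := by
  calc ∫⁻ x in closedBall y (2 * a) \ ball y a, ENNReal.ofReal (dist x y ^ (-(m : ℝ)))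
      ≤ ∫⁻ _ in closedBall y (2 * a) \ ball y a, ENNReal.ofReal (a ^ (-(m : ℝ))) := by
        refine setLIntegral_mono measurable_const fun x hx => ENNReal.ofReal_le_ofReal ?_
        exact rpow_le_rpow_of_nonpos ha (by simpa using hx.2) (by simp)
    _ ≤ ∫⁻ _ in closedBall y (2 * a), ENNReal.ofReal (a ^ (-(m : ℝ))) :=
        lintegral_mono_set Set.sdiff_subset
    _ = ENNReal.ofReal (4 ^ m) := by
        rw [setLIntegral_const, Real.volume_pi_closedBall _ (by positivity), Fintype.card_fin,
          ← ENNReal.ofReal_mul (by positivity), rpow_neg ha.le, rpow_natCast]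
        congr 1
        field_simp
        ring

theorem setLIntegral_rpow_neg_dist_dyadic_le (y : Fin m → ℝ) {a : ℝ} (ha : 0 < a) (N : ℕ) :
    ∫⁻ x in closedBall y (2 ^ (N + 1) * a) \ ball y a, ENNReal.ofReal (dist x y ^ (-(m : ℝ)))
      ≤ (N + 1) * ENNReal.ofReal (4 ^ m) := by
  induction N with
  | zero => simpa using setLIntegral_rpow_neg_dist_shell_le y ha
  | succ N ih =>
    have hsplit : closedBall y (2 ^ (N + 2) * a) \ ball y a ⊆ (closedBall y (2 ^ (N + 1) * a) \
        ball y a) ∪ (closedBall y (2 * (2 ^ (N + 1) * a)) \ ball y (2 ^ (N + 1) * a)) := by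
      intro x ⟨hxb, hxa⟩
      by_cases hx : x ∈ ball y (2 ^ (N + 1) * a)
      · exact .inl ⟨ball_subset_closedBall hx, hxa⟩
      · exact .inr ⟨by rwa [← mul_assoc, ← pow_succ'], hx⟩
    calc _ ≤ _ := lintegral_mono_set hsplit
      _ ≤ _ := lintegral_union_le _ _ _
      _ ≤ (N + 1) * ENNReal.ofReal (4 ^ m) + ENNReal.ofReal (4 ^ m) :=
          add_le_add ih (setLIntegral_rpow_neg_dist_shell_le y (by positivity))
      _ = (↑(N + 1) + 1) * ENNReal.ofReal (4 ^ m) := by push_cast; ring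

theorem setLIntegral_rpow_neg_dist_annulus_le (y : Fin m → ℝ) {a b : ℝ} (ha : 0 < a)
    (hab : a ≤ b) :
    ∫⁻ x in closedBall y b \ ball y a, ENNReal.ofReal (dist x y ^ (-(m : ℝ)))
      ≤ ENNReal.ofReal (4 ^ m * (1 + logb 2 (b / a))) := by
  have hlogb : 0 ≤ logb 2 (b / a) :=
    logb_nonneg one_lt_two ((one_le_div ha).mpr hab)
  set N := ⌊logb 2 (b / a)⌋₊
  have hbN : b ≤ 2 ^ (N + 1) * a := by
    have h := (logb_lt_iff_lt_rpow one_lt_two (div_pos (ha.trans_le hab) ha)).mp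
      (Nat.lt_floor_add_one (logb 2 (b / a)))
    rw [← Nat.cast_add_one, rpow_natCast, div_lt_iff₀ ha] at h
    exact h.le
  calc _ ≤ _ := lintegral_mono_set (Set.sdiff_subset_sdiff_left (closedBall_subset_closedBall hbN))
    _ ≤ (N + 1) * ENNReal.ofReal (4 ^ m) := setLIntegral_rpow_neg_dist_dyadic_le y ha N
    _ = ENNReal.ofReal ((N + 1) * 4 ^ m) := by
        rw [ENNReal.ofReal_mul (by positivity)]; norm_cast
    _ ≤ _ := by
        refine ENNReal.ofReal_le_ofReal ?_
        nlinarith [Nat.floor_le hlogb, pow_pos (four_pos (α := ℝ)) m]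

theorem not_integrableOn_rpow_neg_dist_ball (hm : 0 < m) (y : Fin m → ℝ) {ρ : ℝ} (hρ : 0 < ρ) :
    ¬ IntegrableOn (fun x => dist x y ^ (-(m : ℝ))) (ball y ρ) := by
  have : Nonempty (Fin m) := ⟨⟨0, hm⟩⟩
  intro h
  have hball : (· + y) ⁻¹' ball y ρ = ball 0 ρ := by ext x; simp
  rw [← (measurePreserving_add_right volume y).integrableOn_comp_preimage
    (measurableEmbedding_addRight y), hball] at h
  have h0 : IntegrableOn (fun x : Fin m → ℝ => ‖x‖ ^ (-(m : ℝ))) (ball 0 ρ) := by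
    simpa [Function.comp_def, dist_eq_norm] using h
  rw [integrableOn_fun_norm_addHaar volume (f := fun t => t ^ (-(m : ℝ))),
    Module.finrank_fin_fun] at h0
  have h1 : IntegrableOn (fun t : ℝ => t ^ (-1 : ℝ)) (Set.Ioo 0 ρ) := by
    refine h0.congr_fun (fun t ht => ?_) measurableSet_Ioo
    simp only [smul_eq_mul]
    rw [← rpow_natCast, ← rpow_add ht.1, Nat.cast_sub hm]
    ring_nf
  exact (lt_irrefl _ ((intervalIntegral.integrableOn_Ioo_rpow_iff hρ).mp h1))

theorem setLIntegral_rpow_neg_dist_closedBall_le (c y : Fin m → ℝ) {ℓ : ℝ}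
    (hy : ℓ / 2 < dist y c) (hy' : dist y c ≤ 3 * ℓ / 2) :
    ∫⁻ x in closedBall c (ℓ / 2), ENNReal.ofReal (dist x y ^ (-(m : ℝ)))
      ≤ ENNReal.ofReal (2 * 4 ^ m * (1 + log (ℓ / (dist y c - ℓ / 2)))) := by
  set d := dist y c - ℓ / 2 with hd_def
  have hd : 0 < d := by linarith
  have hdℓ : d ≤ ℓ := by linarith
  have hℓ : 0 < ℓ := hd.trans_le hdℓ
  have hsub : closedBall c (ℓ / 2) ⊆ closedBall y (ℓ + d) \ ball y d := by
    intro x hx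
    have hxc : dist x c ≤ ℓ / 2 := hx
    refine ⟨mem_closedBall.mpr ?_, fun hxy => ?_⟩
    · linarith [dist_triangle x c y, dist_comm c y]
    · linarith [dist_triangle y x c, dist_comm y x, mem_ball.mp hxy]
  have hlogb : logb 2 ((ℓ + d) / d) ≤ 1 + 2 * log (ℓ / d) := by
    have hlog : 0 ≤ log (ℓ / d) := log_nonneg ((one_le_div hd).mpr hdℓ)
    calc logb 2 ((ℓ + d) / d) ≤ logb 2 (2 * (ℓ / d)) := by
          refine logb_le_logb_of_le one_lt_two (div_pos (by linarith) hd) ?_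
          rw [mul_div_assoc', div_le_div_iff_of_pos_right hd]
          linarith
      _ = 1 + log (ℓ / d) / log 2 := by
          rw [logb_mul two_ne_zero (div_pos hℓ hd).ne', logb_self_eq_one one_lt_two, logb]
      _ ≤ 1 + 2 * log (ℓ / d) := by
          rw [add_le_add_iff_left, div_le_iff₀ (log_pos one_lt_two)]
          nlinarith [log_two_gt_d9]
  calc _ ≤ _ := lintegral_mono_set hsub
    _ ≤ ENNReal.ofReal (4 ^ m * (1 + logb 2 ((ℓ + d) / d))) :=
        setLIntegral_rpow_neg_dist_annulus_le y hd (by linarith)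
    _ ≤ _ := ENNReal.ofReal_le_ofReal (by nlinarith [pow_pos (four_pos (α := ℝ)) m])

theorem volume_closedBall_sdiff_closedBall (c r s : ℝ) (hr : 0 ≤ r) (hs : 0 ≤ s) :
    volume (closedBall c (r + s) \ closedBall c r) = ENNReal.ofReal (2 * s) := by
  rw [measure_sdiff (closedBall_subset_closedBall (by linarith))
      measurableSet_closedBall.nullMeasurableSet measure_closedBall_lt_top.ne,
    Real.volume_closedBall, Real.volume_closedBall, ← ENNReal.ofReal_sub _ (by positivity)]
  ring_nf

theorem volume_closedBall_inter_annulus_le (a c : Fin m → ℝ) {ℓ r s : ℝ} (hℓ : 0 ≤ ℓ)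
    (hr : 0 ≤ r) (hs : 0 ≤ s) :
    volume (closedBall a (ℓ / 2) ∩ (closedBall c (r + s) \ closedBall c r))
      ≤ ENNReal.ofReal (2 * m * s * ℓ ^ (m - 1)) := by
  set slab : Fin m → Set (Fin m → ℝ) := fun i => Set.univ.pi
    (Function.update (fun j => closedBall (a j) (ℓ / 2)) i
      (closedBall (c i) (r + s) \ closedBall (c i) r))
  have hcover : closedBall a (ℓ / 2) ∩ (closedBall c (r + s) \ closedBall c r) ⊆ ⋃ i, slab i := by
    rintro y ⟨hya, hyc, hyr⟩
    obtain ⟨i, hi⟩ : ∃ i, r < dist (y i) (c i) := by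
      by_contra! h
      exact hyr ((dist_pi_le_iff hr).mpr h)
    refine Set.mem_iUnion.mpr ⟨i, fun j _ => ?_⟩
    rcases eq_or_ne j i with rfl | hji
    · simpa [hi] using (dist_le_pi_dist y c j).trans (mem_closedBall.mp hyc)
    · simpa [hji] using (dist_le_pi_dist y a j).trans (mem_closedBall.mp hya)
  have hslab : ∀ i, volume (slab i) = ENNReal.ofReal (2 * s) * ENNReal.ofReal ℓ ^ (m - 1) := by
    intro i
    rw [volume_pi_pi]
    simp_rw [Function.apply_update (fun _ => (volume : Measure ℝ))]
    rw [Finset.prod_update_of_mem (Finset.mem_univ i),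
      volume_closedBall_sdiff_closedBall _ _ _ hr hs]
    simp only [Real.volume_closedBall, Finset.prod_const, Finset.card_univ_sdiff,
      Finset.card_singleton, Fintype.card_fin, mul_div_cancel₀ ℓ two_ne_zero]
  calc _ ≤ volume (⋃ i, slab i) := measure_mono hcover
    _ ≤ ∑ i, volume (slab i) := measure_iUnion_fintype_le _ _
    _ = ENNReal.ofReal (2 * m * s * ℓ ^ (m - 1)) := by
        simp only [hslab, Finset.sum_const, Finset.card_univ, Fintype.card_fin, nsmul_eq_mul]
        rw [← ENNReal.ofReal_pow hℓ, ← ENNReal.ofReal_mul (by positivity),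
          ← ENNReal.ofReal_natCast, ← ENNReal.ofReal_mul (by positivity)]
        ring_nf

noncomputable def cubeDist (c : Fin m → ℝ) (ℓ : ℝ) (y : Fin m → ℝ) : ℝ := max (dist y c - ℓ / 2) 0

theorem measurable_cubeDist (c : Fin m → ℝ) (ℓ : ℝ) : Measurable (cubeDist c ℓ) :=
  (((continuous_id.dist continuous_const).sub continuous_const).max continuous_const).measurable

theorem setLIntegral_posLog_div_cubeDist_le (a c : Fin m → ℝ) {ℓK ℓ : ℝ} (hℓK : 0 < ℓK)
    (hℓ : 0 ≤ ℓ) :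
    ∫⁻ y in closedBall a (ℓK / 2), ENNReal.ofReal (log⁺ (ℓK / cubeDist c ℓ y))
      ≤ ENNReal.ofReal (2 * m * ℓK ^ m) := by
  have hpow : 2 * m * ℓK ^ (m - 1) * ℓK = 2 * m * ℓK ^ m := by
    cases m with
    | zero => simp
    | succ n => rw [Nat.add_sub_cancel, pow_succ]; ring
  rw [← hpow]
  refine lintegral_posLog_div_le _ (measurable_cubeDist c ℓ) (fun y => le_max_right _ _) hℓK
    (by positivity) fun s hs => ?_
  have hshell : {y | 0 < cubeDist c ℓ y ∧ cubeDist c ℓ y ≤ s}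
      ⊆ closedBall c (ℓ / 2 + s) \ closedBall c (ℓ / 2) := by
    rintro y ⟨hpos, hle⟩
    have hgap : 0 < dist y c - ℓ / 2 := (lt_max_iff.mp hpos).resolve_right (lt_irrefl 0)
    have hle' : dist y c - ℓ / 2 ≤ s := (le_max_left _ _).trans hle
    exact ⟨mem_closedBall.mpr (by linarith), fun h => by linarith [mem_closedBall.mp h]⟩
  rw [Measure.restrict_apply' measurableSet_closedBall, Set.inter_comm]
  calc _ ≤ _ := measure_mono (Set.inter_subset_inter_right _ hshell)
    _ ≤ _ := volume_closedBall_inter_annulus_le a c hℓK.le (by positivity) hs.le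
    _ = _ := by ring_nf

theorem ae_enorm_setIntegral_rpow_neg_dist_le (hm : 0 < m) {cK cV : Fin m → ℝ} {ℓK ℓV : ℝ}
    (hℓK : 0 < ℓK) (hK3V : closedBall cK (ℓK / 2) ⊆ closedBall cV (3 * ℓV / 2)) :
    ∀ᵐ y ∂volume.restrict (closedBall cK (ℓK / 2)),
      ‖∫ x in closedBall cV (ℓV / 2), dist x y ^ (-(m : ℝ))‖ₑ
        ≤ ENNReal.ofReal (2 * 4 ^ m * (1 + log (ℓV / ℓK) + log⁺ (ℓK / cubeDist cV ℓV y))) := by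
  have : Nonempty (Fin m) := ⟨⟨0, hm⟩⟩
  have hsphere : ∀ᵐ y ∂volume, y ∉ sphere cV (ℓV / 2) :=
    measure_eq_zero_iff_ae_notMem.mp (Measure.addHaar_sphere volume cV (ℓV / 2))
  filter_upwards [ae_restrict_mem measurableSet_closedBall, ae_restrict_of_ae hsphere]
    with y hyK hyV
  rcases lt_trichotomy (dist y cV) (ℓV / 2) with hin | hon | hout
  · have hball : ball y (ℓV / 2 - dist y cV) ⊆ closedBall cV (ℓV / 2) :=
      ball_subset_closedBall.trans (closedBall_subset_closedBall' (by linarith))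
    have hnot : ¬ IntegrableOn (fun x => dist x y ^ (-(m : ℝ))) (closedBall cV (ℓV / 2)) :=
      fun hint => not_integrableOn_rpow_neg_dist_ball hm y (by linarith) (hint.mono_set hball)
    -- inside `V` the kernel is not integrable, so the Bochner integral takes the junk value 0
    rw [integral_undef hnot]
    simp
  · exact absurd hon hyV
  · have hD : cubeDist cV ℓV y = dist y cV - ℓV / 2 := max_eq_left (by linarith)
    have hDpos : 0 < cubeDist cV ℓV y := by rw [hD]; linarith
    calc ‖∫ x in closedBall cV (ℓV / 2), dist x y ^ (-(m : ℝ))‖ₑ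
        ≤ ∫⁻ x in closedBall cV (ℓV / 2), ENNReal.ofReal (dist x y ^ (-(m : ℝ))) := by
          refine (enorm_integral_le_lintegral_enorm _).trans_eq (lintegral_congr fun x => ?_)
          exact Real.enorm_of_nonneg (rpow_nonneg dist_nonneg _)
      _ ≤ ENNReal.ofReal (2 * 4 ^ m * (1 + log (ℓV / cubeDist cV ℓV y))) := by
          rw [hD]
          exact setLIntegral_rpow_neg_dist_closedBall_le cV y hout (hK3V hyK)
      _ ≤ _ := by
          refine ENNReal.ofReal_le_ofReal (mul_le_mul_of_nonneg_left ?_ (by positivity))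
          have hℓV : 0 < ℓV := by linarith [mem_closedBall.mp (hK3V hyK)]
          have hlog : log (ℓK / cubeDist cV ℓV y) ≤ log⁺ (ℓK / cubeDist cV ℓV y) := by
            rw [posLog_apply]; exact le_max_right _ _
          rw [← div_mul_div_cancel₀ hℓK.ne', log_mul (div_pos hℓV hℓK).ne' (div_pos hℓK hDpos).ne']
          linarith


theorem lintegral_enorm_setIntegral_rpow_neg_dist_le (hm : 0 < m) {cK cV : Fin m → ℝ}
    {ℓK ℓV : ℝ} (hℓK : 0 < ℓK) (hKV : ℓK ≤ ℓV)
    (hK3V : closedBall cK (ℓK / 2) ⊆ closedBall cV (3 * ℓV / 2)) :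
    ∫⁻ y in closedBall cK (ℓK / 2), ‖∫ x in closedBall cV (ℓV / 2), dist x y ^ (-(m : ℝ))‖ₑ
      ≤ ENNReal.ofReal (2 * 4 ^ m * ℓK ^ m * (1 + log (ℓV / ℓK) + 2 * m)) := by
  have hA : 0 ≤ 2 * 4 ^ m * (1 + log (ℓV / ℓK)) :=
    mul_nonneg (by positivity) (by linarith [log_nonneg ((one_le_div hℓK).mpr hKV)])
  calc ∫⁻ y in closedBall cK (ℓK / 2), ‖∫ x in closedBall cV (ℓV / 2), dist x y ^ (-(m : ℝ))‖ₑ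
      ≤ ∫⁻ y in closedBall cK (ℓK / 2), (ENNReal.ofReal (2 * 4 ^ m * (1 + log (ℓV / ℓK)))
          + ENNReal.ofReal (2 * 4 ^ m) * ENNReal.ofReal (log⁺ (ℓK / cubeDist cV ℓV y))) := by
        refine lintegral_mono_ae ((ae_enorm_setIntegral_rpow_neg_dist_le hm hℓK hK3V).mono
          fun y hy => hy.trans_eq ?_)
        rw [← ENNReal.ofReal_mul (by positivity), ← ENNReal.ofReal_add hA
          (mul_nonneg (by positivity) posLog_nonneg)]
        ring_nf
    _ = ENNReal.ofReal (2 * 4 ^ m * (1 + log (ℓV / ℓK))) * volume (closedBall cK (ℓK / 2))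
          + ENNReal.ofReal (2 * 4 ^ m) * ∫⁻ y in closedBall cK (ℓK / 2),
            ENNReal.ofReal (log⁺ (ℓK / cubeDist cV ℓV y)) := by
        rw [lintegral_add_left measurable_const, setLIntegral_const, lintegral_const_mul]
        exact (continuous_posLog.measurable.comp
          (measurable_const.div (measurable_cubeDist cV ℓV))).ennreal_ofReal
    _ ≤ ENNReal.ofReal (2 * 4 ^ m * (1 + log (ℓV / ℓK))) * ENNReal.ofReal (ℓK ^ m)
          + ENNReal.ofReal (2 * 4 ^ m) * ENNReal.ofReal (2 * m * ℓK ^ m) := by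
        rw [Real.volume_pi_closedBall _ (by positivity), Fintype.card_fin,
          mul_div_cancel₀ _ two_ne_zero]
        gcongr
        exact setLIntegral_posLog_div_cubeDist_le cK cV hℓK (hℓK.le.trans hKV)
    _ = ENNReal.ofReal (2 * 4 ^ m * ℓK ^ m * (1 + log (ℓV / ℓK) + 2 * m)) := by
        rw [← ENNReal.ofReal_mul hA, ← ENNReal.ofReal_mul (by positivity),
          ← ENNReal.ofReal_add (by positivity) (by positivity)]
        ring_nf

end

/-- For cubes `K = B̄(c_K, ℓ_K/2)`, `V = B̄(c_V, ℓ_V/2)` in ℝ^m (ℓ^∞ metric) with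
`ℓ_K ≤ ℓ_V` and `K ⊆ 3V`:
`∫_K ∫_V |x-y|^{-m} dx dy ≤ C(m) |K| (1 + log(ℓ_V/ℓ_K))`, with `|K| = ℓ_K^m`.
(In particular this covers two distinct dyadic children of a common cube.) -/
theorem stmt4 (m : ℕ) (hm : 0 < m) :
    ∃ C : ℝ, 0 < C ∧ ∀ (cK cV : Fin m → ℝ) (ℓK ℓV : ℝ), 0 < ℓK → ℓK ≤ ℓV →
      closedBall cK (ℓK / 2) ⊆ closedBall cV (3 * ℓV / 2) →
      (∫ y in closedBall cK (ℓK / 2), ∫ x in closedBall cV (ℓV / 2),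
          dist x y ^ (-(m : ℝ)))
        ≤ C * ℓK ^ m * (1 + Real.log (ℓV / ℓK)) := by
  refine ⟨2 * 4 ^ m * (2 * m + 1), by positivity, fun cK cV ℓK ℓV hℓK hKV hK3V => ?_⟩
  have hlog : 0 ≤ log (ℓV / ℓK) := log_nonneg ((one_le_div hℓK).mpr hKV)
  calc _ ≤ 2 * 4 ^ m * ℓK ^ m * (1 + log (ℓV / ℓK) + 2 * m) :=
        integral_le_of_lintegral_enorm_le (by positivity)
          (lintegral_enorm_setIntegral_rpow_neg_dist_le hm hℓK hKV hK3V)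
    _ ≤ 2 * 4 ^ m * (2 * m + 1) * ℓK ^ m * (1 + log (ℓV / ℓK)) := by
        have : 0 ≤ 2 * 4 ^ m * ℓK ^ m * ((2 * m) * log (ℓV / ℓK)) := by positivity
        linarith
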